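/- arXiv:1311.2177 — 7 statements merged into one kernel-verified Lean document; each statement's English description precedes it below -/
import Mathlib

section
/- A nontrivial real Banach space X has the local diameter 2 property if and only if X** has the weak* local diameter 2 property; X has the diameter 2 property if and only if X** has the weak* diameter 2 property; and X has the strong diameter 2 property if and only if X** has the weak* strong diameter 2 property (where in each case the weak* property of X** is taken with respect to the predual X*). -/
/-!
The canonical embedding `J : X → X**` is an isometry carrying slices, relatively weakly open
subsets and convex combinations of slices of `B_X` into their weak* counterparts in `B_{X**}`;
this gives the diameter 2 properties of `X**` from those of `X`. Conversely, Goldstine's theorem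
(Hahn–Banach separation in the locally convex space `(X**, weak*)`, whose continuous functionals
are the elements of `X*`) shows that `J(B_X ∩ J⁻¹ U)` is weak*-dense in `B_{X**} ∩ U` for every
weak*-open `U`, and the weak topology of `X` is induced from the weak* topology of `X**` by `J`.
Given `F, G` in a weak* set with `‖F - G‖` close to 2, pick `p ∈ B_{X*}` with `(F - G) p` close
to 2 and approximate `F` and `G` at `p` by points `x, y` of the corresponding subset of `B_X`:
then `‖x - y‖ ≥ p x - p y` is close to 2 as well.
-/

open Metric Set

noncomputable section

/-- A slice of the closed unit ball determined by `f ∈ S_{X*}` and `α > 0` is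
`{x ∈ B_X : f x > 1 - α}`.  `X` has the local diameter 2 property if every slice
of `B_X` has diameter 2. -/
def LocalDiameterTwoProp (X : Type*) [NormedAddCommGroup X] [NormedSpace ℝ X] : Prop :=
  ∀ f : X →L[ℝ] ℝ, ‖f‖ = 1 → ∀ α : ℝ, 0 < α →
    Metric.diam {x : X | ‖x‖ ≤ 1 ∧ 1 - α < f x} = 2

/-- `X` has the diameter 2 property if every nonempty relatively weakly open
subset of `B_X` has diameter 2. -/
def DiameterTwoProp (X : Type*) [NormedAddCommGroup X] [NormedSpace ℝ X] : Prop :=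
  ∀ U : Set (WeakSpace ℝ X), IsOpen U →
    {x : X | ‖x‖ ≤ 1 ∧ toWeakSpace ℝ X x ∈ U}.Nonempty →
    Metric.diam {x : X | ‖x‖ ≤ 1 ∧ toWeakSpace ℝ X x ∈ U} = 2

/-- `X` has the strong diameter 2 property if every convex combination of slices
of `B_X` has diameter 2. -/
def StrongDiameterTwoProp (X : Type*) [NormedAddCommGroup X] [NormedSpace ℝ X] : Prop :=
  ∀ (n : ℕ) (lam : Fin n → ℝ) (f : Fin n → X →L[ℝ] ℝ) (α : Fin n → ℝ),
    (∀ i, 0 ≤ lam i) → (∑ i, lam i) = 1 → (∀ i, ‖f i‖ = 1) → (∀ i, 0 < α i) →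
    Metric.diam {x : X | ∃ g : Fin n → X,
      (∀ i, ‖g i‖ ≤ 1 ∧ 1 - α i < f i (g i)) ∧ x = ∑ i, lam i • g i} = 2

/-- The dual of `X` has the weak* local diameter 2 property if every weak* slice
`{f ∈ B_{X*} : f x > 1 - α}` (with `x ∈ S_X`, `α > 0`) has diameter 2. -/
def WStarLocalDiameterTwoProp (X : Type*) [NormedAddCommGroup X] [NormedSpace ℝ X] : Prop :=
  ∀ x : X, ‖x‖ = 1 → ∀ α : ℝ, 0 < α →
    Metric.diam {f : X →L[ℝ] ℝ | ‖f‖ ≤ 1 ∧ 1 - α < f x} = 2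

/-- The dual of `X` has the weak* diameter 2 property if every nonempty relatively
weak* open subset of `B_{X*}` has diameter 2. -/
def WStarDiameterTwoProp (X : Type*) [NormedAddCommGroup X] [NormedSpace ℝ X] : Prop :=
  ∀ U : Set (WeakDual ℝ X), IsOpen U →
    {f : X →L[ℝ] ℝ | ‖f‖ ≤ 1 ∧ StrongDual.toWeakDual f ∈ U}.Nonempty →
    Metric.diam {f : X →L[ℝ] ℝ | ‖f‖ ≤ 1 ∧ StrongDual.toWeakDual f ∈ U} = 2

/-- The dual of `X` has the weak* strong diameter 2 property if every convex
combination of weak* slices of `B_{X*}` has diameter 2. -/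
def WStarStrongDiameterTwoProp (X : Type*) [NormedAddCommGroup X] [NormedSpace ℝ X] : Prop :=
  ∀ (n : ℕ) (lam : Fin n → ℝ) (x : Fin n → X) (α : Fin n → ℝ),
    (∀ i, 0 ≤ lam i) → (∑ i, lam i) = 1 → (∀ i, ‖x i‖ = 1) → (∀ i, 0 < α i) →
    Metric.diam {f : X →L[ℝ] ℝ | ∃ g : Fin n → (X →L[ℝ] ℝ),
      (∀ i, ‖g i‖ ≤ 1 ∧ 1 - α i < g i (x i)) ∧ f = ∑ i, lam i • g i} = 2

/-- `X` is locally octahedral. -/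
def LocallyOctahedral (X : Type*) [NormedAddCommGroup X] [NormedSpace ℝ X] : Prop :=
  ∀ x : X, ∀ ε : ℝ, 0 < ε → ∃ y : X, ‖y‖ = 1 ∧
    ∀ s : ℝ, (1 - ε) * (|s| * ‖x‖ + ‖y‖) ≤ ‖s • x + y‖

/-- `X` is weakly octahedral. -/
def WeaklyOctahedral (X : Type*) [NormedAddCommGroup X] [NormedSpace ℝ X] : Prop :=
  ∀ E : Subspace ℝ X, FiniteDimensional ℝ E → ∀ f : X →L[ℝ] ℝ, ‖f‖ ≤ 1 →
    ∀ ε : ℝ, 0 < ε → ∃ y : X, ‖y‖ = 1 ∧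
      ∀ x ∈ E, (1 - ε) * (|f x| + ‖y‖) ≤ ‖x + y‖

/-- The norm on `X` is octahedral. -/
def Octahedral (X : Type*) [NormedAddCommGroup X] [NormedSpace ℝ X] : Prop :=
  ∀ E : Subspace ℝ X, FiniteDimensional ℝ E → ∀ ε : ℝ, 0 < ε →
    ∃ y : X, ‖y‖ = 1 ∧ ∀ x ∈ E, (1 - ε) * (‖x‖ + ‖y‖) ≤ ‖x + y‖

open NormedSpace

section Diameter

variable {α : Type*} [PseudoMetricSpace α]

theorem le_diam_of_forall_lt_dist {S : Set α} (hS : Bornology.IsBounded S) {d : ℝ}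
    (h : ∀ r < d, ∃ a ∈ S, ∃ b ∈ S, r < dist a b) : d ≤ diam S :=
  le_of_forall_lt fun r hr =>
    let ⟨_, ha, _, hb, hab⟩ := h r hr
    hab.trans_le (dist_le_diam_of_mem hS ha hb)

theorem exists_lt_dist_of_lt_diam {S : Set α} {r : ℝ} (hr : 0 ≤ r) (h : r < diam S) :
    ∃ a ∈ S, ∃ b ∈ S, r < dist a b := by
  by_contra! hS
  exact (diam_le_of_forall_dist_le hr hS).not_gt h

end Diameter

section UnitBall

variable {E F : Type*} [SeminormedAddCommGroup E] [SeminormedAddCommGroup F]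

theorem diam_le_two_of_subset_closedBall {S : Set E} (hS : S ⊆ closedBall 0 1) : diam S ≤ 2 := by
  simpa using (diam_mono hS isBounded_closedBall).trans (diam_closedBall zero_le_one)

theorem diam_eq_two_of_isometry {φ : E → F} (hφ : Isometry φ) {S : Set E} {T : Set F}
    (hT : T ⊆ closedBall 0 1) (hST : MapsTo φ S T) (hS : diam S = 2) : diam T = 2 :=
  (diam_le_two_of_subset_closedBall hT).antisymm <| by
    rw [← hS, ← hφ.diam_image]
    exact diam_mono hST.image_subset (isBounded_closedBall.subset hT)

theorem sum_smul_mem_closedBall_zero_one {ι : Type*} [Fintype ι] [NormedSpace ℝ E] {c : ι → ℝ}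
    (hc : ∀ i, 0 ≤ c i) (hsum : ∑ i, c i = 1) {g : ι → E} (hg : ∀ i, ‖g i‖ ≤ 1) :
    ∑ i, c i • g i ∈ closedBall (0 : E) 1 :=
  (convex_closedBall 0 1).sum_mem (fun i _ => hc i) hsum fun i _ => mem_closedBall_zero_iff.2 (hg i)

theorem ContinuousLinearMap.sub_le_dist_of_norm_le_one [NormedSpace ℝ E] {f : E →L[ℝ] ℝ}
    (hf : ‖f‖ ≤ 1) (a b : E) : f a - f b ≤ dist a b :=
  calc f a - f b = f (a - b) := (map_sub f a b).symm
    _ ≤ ‖f (a - b)‖ := le_abs_self _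
    _ ≤ ‖f‖ * ‖a - b‖ := f.le_opNorm _
    _ ≤ dist a b := by rw [dist_eq_norm]; exact mul_le_of_le_one_left (norm_nonneg _) hf

end UnitBall

theorem ContinuousLinearMap.exists_norm_le_one_lt_apply {E : Type*} [NormedAddCommGroup E]
    [NormedSpace ℝ E] (f : E →L[ℝ] ℝ) {r : ℝ} (hr : r < ‖f‖) : ∃ x : E, ‖x‖ ≤ 1 ∧ r < f x := by
  obtain ⟨x, hx, hrx⟩ := f.exists_lt_apply_of_lt_opNorm hr
  rcases lt_abs.1 hrx with h | h
  · exact ⟨x, hx.le, h⟩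
  · exact ⟨-x, by simpa using hx.le, by simpa using h⟩

theorem sum_smul_mem_closure {R M ι : Type*} [Semiring R] [TopologicalSpace M] [AddCommMonoid M]
    [Module R M] [ContinuousAdd M] [ContinuousConstSMul R M] [Fintype ι] (c : ι → R)
    {s : ι → Set M} {a : ι → M} (ha : ∀ i, a i ∈ closure (s i)) :
    ∑ i, c i • a i ∈ closure {y | ∃ b : ι → M, (∀ i, b i ∈ s i) ∧ y = ∑ i, c i • b i} := by
  have ha' : a ∈ closure (univ.pi s) := by
    rw [closure_pi_set]
    exact fun i _ => ha i
  exact map_mem_closure (f := fun b : ι → M => ∑ i, c i • b i) (by fun_prop) ha'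
    fun b hb => ⟨b, fun i => hb i (mem_univ i), rfl⟩

-- `WeakDual` derives its instances separately, so the `WeakBilin` ones are not found by
-- unification; the same mismatch forces the explicit `(E := ...)` arguments below.
instance WeakDual.instLocallyConvexSpaceReal (E : Type*) [NormedAddCommGroup E] [NormedSpace ℝ E] :
    LocallyConvexSpace ℝ (WeakDual ℝ E) := by
  exact @WeakBilin.locallyConvexSpace ℝ (StrongDual ℝ E) E _ _ _ _ _ _ _ _ (topDualPairing ℝ E)

theorem WeakDual.exists_eq_eval {E : Type*} [NormedAddCommGroup E] [NormedSpace ℝ E]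
    (ℓ : StrongDual ℝ (WeakDual ℝ E)) : ∃ x : E, ∀ φ : WeakDual ℝ E, ℓ φ = φ x := by
  obtain ⟨x, hx⟩ :=
    @LinearMap.dualEmbedding_surjective ℝ (StrongDual ℝ E) E _ _ _ _ _ (topDualPairing ℝ E) ℓ
  exact ⟨x, fun φ => by rw [← hx]; rfl⟩

theorem NormedSpace.isometry_inclusionInDoubleDual (𝕜 E : Type*) [RCLike 𝕜]
    [SeminormedAddCommGroup E] [NormedSpace 𝕜 E] : Isometry (inclusionInDoubleDual 𝕜 E) :=
  (inclusionInDoubleDualLi 𝕜).isometry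

theorem NormedSpace.norm_inclusionInDoubleDual (𝕜 : Type*) {E : Type*} [RCLike 𝕜]
    [SeminormedAddCommGroup E] [NormedSpace 𝕜 E] (x : E) : ‖inclusionInDoubleDual 𝕜 E x‖ = ‖x‖ :=
  (inclusionInDoubleDualLi 𝕜).norm_map x

section Goldstine

variable {X : Type*} [NormedAddCommGroup X] [NormedSpace ℝ X]

variable (X) in
def weakStarBidualEmbedding : X →ₗ[ℝ] WeakDual ℝ (StrongDual ℝ X) :=
  (inclusionInDoubleDualWeak ℝ X).toLinearMap ∘ₗ (toWeakSpace ℝ X).toLinearMap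

@[simp]
theorem weakStarBidualEmbedding_apply (x : X) (f : StrongDual ℝ X) :
    weakStarBidualEmbedding X x f = f x := rfl

theorem goldstine {F : StrongDual ℝ (StrongDual ℝ X)} (hF : ‖F‖ ≤ 1) :
    StrongDual.toWeakDual F ∈ closure (weakStarBidualEmbedding X '' closedBall 0 1) := by
  by_contra hF'
  have hconv : Convex ℝ (weakStarBidualEmbedding X '' closedBall 0 1) :=
    (convex_closedBall 0 1).linear_image _
  obtain ⟨ℓ, u, hℓ, hu⟩ := geometric_hahn_banach_closed_point
    (Convex.closure (E := WeakDual ℝ (StrongDual ℝ X)) hconv) isClosed_closure hF'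
  obtain ⟨f, hf⟩ := WeakDual.exists_eq_eval ℓ
  have hfu : ∀ x ∈ closedBall (0 : X) 1, f x < u := fun x hx => by
    simpa [hf] using hℓ _ (subset_closure (mem_image_of_mem _ hx))
  have hu0 : 0 < u := by simpa using hfu 0 (mem_closedBall_self zero_le_one)
  have hfu' : ‖f‖ ≤ u := by
    refine f.opNorm_le_of_unit_norm hu0.le fun x hx => abs_le.2 ⟨?_, (hfu x ?_).le⟩
    · have := hfu (-x) (by simp [hx])
      rw [map_neg] at this
      linarith
    · simp [hx]
  have hFf : F f ≤ u := (le_abs_self _).trans <| (F.le_opNorm f).trans <|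
    (mul_le_mul hF hfu' (norm_nonneg _) zero_le_one).trans_eq (one_mul u)
  rw [hf] at hu
  exact hFf.not_gt hu

theorem goldstine_of_isOpen {F : StrongDual ℝ (StrongDual ℝ X)} (hF : ‖F‖ ≤ 1)
    {U : Set (WeakDual ℝ (StrongDual ℝ X))} (hU : IsOpen U) (hFU : StrongDual.toWeakDual F ∈ U) :
    StrongDual.toWeakDual F ∈
      closure (weakStarBidualEmbedding X '' {x | ‖x‖ ≤ 1 ∧ weakStarBidualEmbedding X x ∈ U}) := by
  refine mem_closure_iff.2 fun V hV hFV => ?_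
  obtain ⟨_, ⟨hxV, hxU⟩, x, hx, rfl⟩ := mem_closure_iff.1 (goldstine hF) _ (hV.inter hU) ⟨hFV, hFU⟩
  exact ⟨_, hxV, x, ⟨mem_closedBall_zero_iff.1 hx, hxU⟩, rfl⟩

end Goldstine

section DiameterTwo

variable {X : Type*} [NormedAddCommGroup X] [NormedSpace ℝ X]

theorem diam_eq_two_of_subset_closure {S : Set X} {T : Set (StrongDual ℝ (StrongDual ℝ X))}
    (hS : S ⊆ closedBall 0 1) (hT : diam T = 2)
    (hTS : StrongDual.toWeakDual '' T ⊆ closure (weakStarBidualEmbedding X '' S)) :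
    diam S = 2 := by
  refine (diam_le_two_of_subset_closedBall hS).antisymm <|
    le_diam_of_forall_lt_dist (isBounded_closedBall.subset hS) fun r hr => ?_
  set s := max r 0
  have hs : s < 2 := max_lt hr two_pos
  obtain ⟨F, hF, G, hG, hFG⟩ :=
    exists_lt_dist_of_lt_diam (S := T) (r := (s + 2) / 2) (by positivity) (by rw [hT]; linarith)
  obtain ⟨p, hp, hpFG⟩ := (F - G).exists_norm_le_one_lt_apply (dist_eq_norm F G ▸ hFG)
  have happrox : ∀ H ∈ T, ∃ x ∈ S, |p x - H p| < (2 - s) / 4 := by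
    intro H hH
    have hopen : IsOpen {K : WeakDual ℝ (StrongDual ℝ X) | |K p - H p| < (2 - s) / 4} :=
      isOpen_lt (continuous_abs.comp ((WeakDual.eval_continuous p).sub continuous_const))
        continuous_const
    obtain ⟨_, hK, x, hx, rfl⟩ := mem_closure_iff.1 (hTS (mem_image_of_mem _ hH)) _ hopen
      (by show |H p - H p| < _; rw [sub_self, abs_zero]; linarith)
    exact ⟨x, hx, hK⟩
  obtain ⟨x, hx, hxF⟩ := happrox F hF
  obtain ⟨y, hy, hyG⟩ := happrox G hG
  refine ⟨x, hx, y, hy, ?_⟩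
  have hxy := p.sub_le_dist_of_norm_le_one hp x y
  rw [sub_apply] at hpFG
  linarith [abs_lt.1 hxF, abs_lt.1 hyG, le_max_left r 0]

theorem isOpen_weakStarSlice (x : StrongDual ℝ X) (a : ℝ) :
    IsOpen {G : WeakDual ℝ (StrongDual ℝ X) | a < G x} :=
  isOpen_lt continuous_const (WeakDual.eval_continuous x)

theorem localDiameterTwoProp_of_wStarLocalDiameterTwoProp_dual
    (h : WStarLocalDiameterTwoProp (StrongDual ℝ X)) :
    LocalDiameterTwoProp X := by
  intro f hf α hα
  refine diam_eq_two_of_subset_closure (fun x hx => mem_closedBall_zero_iff.2 hx.1)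
    (h f hf α hα) ?_
  rintro _ ⟨F, hF, rfl⟩
  exact goldstine_of_isOpen hF.1 (isOpen_weakStarSlice f (1 - α)) hF.2

theorem LocalDiameterTwoProp.wStarLocalDiameterTwoProp_dual (h : LocalDiameterTwoProp X) :
    WStarLocalDiameterTwoProp (StrongDual ℝ X) := by
  intro f hf α hα
  refine diam_eq_two_of_isometry (isometry_inclusionInDoubleDual ℝ X)
    (fun F hF => mem_closedBall_zero_iff.2 hF.1) ?_ (h f hf α hα)
  exact fun x hx => ⟨(norm_inclusionInDoubleDual ℝ x).trans_le hx.1, hx.2⟩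

theorem diameterTwoProp_of_wStarDiameterTwoProp_dual (h : WStarDiameterTwoProp (StrongDual ℝ X)) :
    DiameterTwoProp X := by
  rintro U hU ⟨x₀, hx₀, hx₀U⟩
  obtain ⟨U', hU', rfl⟩ := (isEmbedding_inclusionInDoubleDualWeak ℝ X).isInducing.isOpen_iff.1 hU
  have hT := h U' hU' ⟨inclusionInDoubleDual ℝ X x₀,
    (norm_inclusionInDoubleDual ℝ x₀).trans_le hx₀, hx₀U⟩
  refine diam_eq_two_of_subset_closure (fun x hx => mem_closedBall_zero_iff.2 hx.1) hT ?_
  rintro _ ⟨F, hF, rfl⟩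
  exact goldstine_of_isOpen hF.1 hU' hF.2

theorem DiameterTwoProp.wStarDiameterTwoProp_dual (h : DiameterTwoProp X) :
    WStarDiameterTwoProp (StrongDual ℝ X) := by
  rintro U hU ⟨F, hF, hFU⟩
  have hW := hU.preimage (inclusionInDoubleDualWeak ℝ X).continuous
  obtain ⟨_, -, x, hx, -⟩ := mem_closure_iff.1 (goldstine_of_isOpen hF hU hFU) univ isOpen_univ
    (mem_univ _)
  refine diam_eq_two_of_isometry (isometry_inclusionInDoubleDual ℝ X)
    (fun F hF => mem_closedBall_zero_iff.2 hF.1) ?_ (h _ hW ⟨x, hx⟩)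
  exact fun x hx => ⟨(norm_inclusionInDoubleDual ℝ x).trans_le hx.1, hx.2⟩

theorem StrongDiameterTwoProp.wStarStrongDiameterTwoProp_dual (h : StrongDiameterTwoProp X) :
    WStarStrongDiameterTwoProp (StrongDual ℝ X) := by
  intro n lam f α hlam hsum hf hα
  refine diam_eq_two_of_isometry (isometry_inclusionInDoubleDual ℝ X) ?_ ?_
    (h n lam f α hlam hsum hf hα)
  · rintro _ ⟨g, hg, rfl⟩
    exact sum_smul_mem_closedBall_zero_one (E := StrongDual ℝ (StrongDual ℝ X)) hlam hsum
      fun i => (hg i).1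
  · rintro _ ⟨g, hg, rfl⟩
    refine ⟨fun i => inclusionInDoubleDual ℝ X (g i), fun i =>
      ⟨(norm_inclusionInDoubleDual ℝ (g i)).trans_le (hg i).1, (hg i).2⟩, ?_⟩
    simp only [map_sum, map_smul]

theorem strongDiameterTwoProp_of_wStarStrongDiameterTwoProp_dual
    (h : WStarStrongDiameterTwoProp (StrongDual ℝ X)) :
    StrongDiameterTwoProp X := by
  intro n lam f α hlam hsum hf hα
  refine diam_eq_two_of_subset_closure ?_ (h n lam f α hlam hsum hf hα) ?_
  · rintro _ ⟨g, hg, rfl⟩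
    exact sum_smul_mem_closedBall_zero_one hlam hsum fun i => (hg i).1
  · rintro _ ⟨_, ⟨F, hF, rfl⟩, rfl⟩
    have hFi := fun i =>
      goldstine_of_isOpen (hF i).1 (isOpen_weakStarSlice (f i) (1 - α i)) (hF i).2
    rw [map_sum]
    simp_rw [map_smul]
    refine closure_mono ?_ (sum_smul_mem_closure lam hFi)
    rintro _ ⟨b, hb, rfl⟩
    choose g hg hgb using hb
    exact ⟨∑ i, lam i • g i, ⟨g, hg, rfl⟩, by simp [map_sum, map_smul, hgb]⟩

end DiameterTwo

theorem stmt_0_general (X : Type*) [NormedAddCommGroup X] [NormedSpace ℝ X] :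
    (LocalDiameterTwoProp X ↔ WStarLocalDiameterTwoProp (StrongDual ℝ X)) ∧
    (DiameterTwoProp X ↔ WStarDiameterTwoProp (StrongDual ℝ X)) ∧
    (StrongDiameterTwoProp X ↔ WStarStrongDiameterTwoProp (StrongDual ℝ X)) :=
  ⟨⟨LocalDiameterTwoProp.wStarLocalDiameterTwoProp_dual,
      localDiameterTwoProp_of_wStarLocalDiameterTwoProp_dual⟩,
    ⟨DiameterTwoProp.wStarDiameterTwoProp_dual, diameterTwoProp_of_wStarDiameterTwoProp_dual⟩,
    ⟨StrongDiameterTwoProp.wStarStrongDiameterTwoProp_dual,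
      strongDiameterTwoProp_of_wStarStrongDiameterTwoProp_dual⟩⟩

theorem stmt_0 (X : Type*) [NormedAddCommGroup X] [NormedSpace ℝ X] [CompleteSpace X] [Nontrivial X] :
    (LocalDiameterTwoProp X ↔ WStarLocalDiameterTwoProp (StrongDual ℝ X)) ∧
    (DiameterTwoProp X ↔ WStarDiameterTwoProp (StrongDual ℝ X)) ∧
    (StrongDiameterTwoProp X ↔ WStarStrongDiameterTwoProp (StrongDual ℝ X)) :=
  stmt_0_general X
end
end

section
/- For a nontrivial real Banach space X the following are equivalent: (i) X is locally octahedral; (ii) for every x ∈ S_X and every ε > 0 there is y ∈ S_X such that ‖x + t·y‖ ≥ (1−ε)(‖x‖ + t) and ‖x − t·y‖ ≥ (1−ε)(‖x‖ + t) for all t > 0; (iii) for every x ∈ S_X and every ε > 0 there is y ∈ S_X such that ‖x + y‖ ≥ 2 − ε and ‖x − y‖ ≥ 2 − ε. -/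
open Metric Set

noncomputable section

/-!
Everything reduces to the unit sphere by homogeneity. A pair of unit vectors with `‖x + y‖ ≥ 2 - ε`
spans nearly an `ℓ₁`-segment: `α • x + β • y` is `max α β • (x + y)` corrected by a vector of norm at
most `|α - β|`, so `‖α • x + β • y‖ ≥ (1 - ε) (α + β)` for all `α, β ≥ 0`. Asking this for both `x + y`
and `x - y` covers all signs of the coefficient of `x`, which is local octahedrality.
-/

section Octahedral

variable {X : Type*} [NormedAddCommGroup X] [NormedSpace ℝ X]

lemma one_sub_mul_add_le_norm_smul_add_smul_of_le {a b : X} (ha : ‖a‖ ≤ 1) {δ : ℝ}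
    (hδ : 0 ≤ δ) (h : 2 - δ ≤ ‖a + b‖) {α β : ℝ} (hα : 0 ≤ α) (hαβ : α ≤ β) :
    (1 - δ) * (α + β) ≤ ‖α • a + β • b‖ := by
  have hβ : 0 ≤ β := hα.trans hαβ
  have hsplit : α • a + β • b = β • (a + b) - (β - α) • a := by module
  have hlower : β * ‖a + b‖ - (β - α) * ‖a‖ ≤ ‖α • a + β • b‖ := by
    rw [hsplit]
    convert norm_sub_norm_le (β • (a + b)) ((β - α) • a) using 2 <;>
      simp only [norm_smul, Real.norm_eq_abs, abs_of_nonneg hβ, abs_of_nonneg (sub_nonneg.2 hαβ)]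
  nlinarith [mul_le_mul_of_nonneg_left h hβ, mul_le_mul_of_nonneg_left ha (sub_nonneg.2 hαβ)]

lemma one_sub_mul_add_le_norm_smul_add_smul {a b : X} (ha : ‖a‖ ≤ 1) (hb : ‖b‖ ≤ 1) {δ : ℝ}
    (h : 2 - δ ≤ ‖a + b‖) {α β : ℝ} (hα : 0 ≤ α) (hβ : 0 ≤ β) :
    (1 - δ) * (α + β) ≤ ‖α • a + β • b‖ := by
  have hδ : 0 ≤ δ := by linarith [norm_add_le a b]
  rcases le_total α β with hαβ | hβα
  · exact one_sub_mul_add_le_norm_smul_add_smul_of_le ha hδ h hα hαβ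
  · rw [add_comm α, add_comm (α • a)]
    exact one_sub_mul_add_le_norm_smul_add_smul_of_le hb hδ (by rwa [add_comm]) hβ hβα

lemma one_sub_mul_abs_add_one_le_norm_smul_add {u y : X} (hu : ‖u‖ = 1) (hy : ‖y‖ = 1)
    {ε : ℝ} (hadd : 2 - ε ≤ ‖u + y‖) (hsub : 2 - ε ≤ ‖u - y‖) (r : ℝ) :
    (1 - ε) * (|r| + 1) ≤ ‖r • u + y‖ := by
  rcases le_or_gt 0 r with hr | hr
  · simpa [abs_of_nonneg hr] using
      one_sub_mul_add_le_norm_smul_add_smul hu.le hy.le hadd hr zero_le_one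
  · have hneg : 2 - ε ≤ ‖-u + y‖ := by rwa [← norm_neg, neg_add, neg_neg, ← sub_eq_add_neg]
    simpa [abs_of_neg hr] using
      one_sub_mul_add_le_norm_smul_add_smul (norm_neg u ▸ hu.le) hy.le hneg (neg_nonneg.2 hr.le)
        zero_le_one

lemma le_norm_add_smul_of_forall_le_norm_smul_add {x y : X} {c : ℝ}
    (h : ∀ s : ℝ, c * (|s| * ‖x‖ + ‖y‖) ≤ ‖s • x + y‖) {t : ℝ} (ht : 0 < t) :
    c * (‖x‖ + t * ‖y‖) ≤ ‖x + t • y‖ := by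
  have hscale : ‖x + t • y‖ = t * ‖t⁻¹ • x + y‖ := by
    rw [← norm_smul_of_nonneg ht.le, smul_add, smul_inv_smul₀ ht.ne']
  rw [hscale]
  calc c * (‖x‖ + t * ‖y‖) = t * (c * (|t⁻¹| * ‖x‖ + ‖y‖)) := by
        rw [abs_of_pos (inv_pos.2 ht)]; field_simp
    _ ≤ t * ‖t⁻¹ • x + y‖ := mul_le_mul_of_nonneg_left (h t⁻¹) ht.le

lemma exists_norm_eq_one_smul_eq [Nontrivial X] (x : X) : ∃ u : X, ‖u‖ = 1 ∧ ‖x‖ • u = x := by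
  by_cases hx : x = 0
  · obtain ⟨u, hu⟩ := exists_norm_eq X zero_le_one
    exact ⟨u, hu, by simp [hx]⟩
  · exact ⟨‖x‖⁻¹ • x, norm_smul_inv_norm hx, smul_inv_smul₀ (norm_ne_zero_iff.2 hx) x⟩

end Octahedral

theorem stmt_1_general (X : Type*) [NormedAddCommGroup X] [NormedSpace ℝ X] [Nontrivial X] :
    List.TFAE
      [LocallyOctahedral X,
       ∀ x : X, ‖x‖ = 1 → ∀ ε : ℝ, 0 < ε → ∃ y : X, ‖y‖ = 1 ∧
         ∀ t : ℝ, 0 < t → (1 - ε) * (‖x‖ + t) ≤ ‖x + t • y‖ ∧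
           (1 - ε) * (‖x‖ + t) ≤ ‖x - t • y‖,
       ∀ x : X, ‖x‖ = 1 → ∀ ε : ℝ, 0 < ε → ∃ y : X, ‖y‖ = 1 ∧
         2 - ε ≤ ‖x + y‖ ∧ 2 - ε ≤ ‖x - y‖] := by
  tfae_have 1 → 2 := by
    intro hloc x hx ε hε
    obtain ⟨y, hy, hall⟩ := hloc x ε hε
    have hall_neg : ∀ s : ℝ, (1 - ε) * (|s| * ‖x‖ + ‖-y‖) ≤ ‖s • x + -y‖ := fun s => by
      simpa [neg_add_eq_sub, norm_sub_rev, ← sub_eq_add_neg] using hall (-s)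
    refine ⟨y, hy, fun t ht => ⟨?_, ?_⟩⟩
    · simpa only [hy, mul_one] using le_norm_add_smul_of_forall_le_norm_smul_add hall ht
    · simpa only [norm_neg, hy, mul_one, smul_neg, ← sub_eq_add_neg] using
        le_norm_add_smul_of_forall_le_norm_smul_add hall_neg ht
  tfae_have 2 → 3 := by
    intro h x hx ε hε
    obtain ⟨y, hy, hall⟩ := h x hx (ε / 2) (by linarith)
    obtain ⟨hadd, hsub⟩ := hall 1 one_pos
    rw [hx, one_smul] at hadd hsub
    exact ⟨y, hy, by linarith, by linarith⟩
  tfae_have 3 → 1 := by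
    intro h x ε hε
    obtain ⟨u, hu, hxu⟩ := exists_norm_eq_one_smul_eq x
    obtain ⟨y, hy, hadd, hsub⟩ := h u hu ε hε
    refine ⟨y, hy, fun s => ?_⟩
    have hsx : s • x = (s * ‖x‖) • u := by rw [← smul_smul, hxu]
    simpa [hsx, abs_mul, hy] using
      one_sub_mul_abs_add_one_le_norm_smul_add hu hy hadd hsub (s * ‖x‖)
  tfae_finish

theorem stmt_1 (X : Type*) [NormedAddCommGroup X] [NormedSpace ℝ X] [CompleteSpace X] [Nontrivial X] :
    List.TFAE
      [LocallyOctahedral X,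
       ∀ x : X, ‖x‖ = 1 → ∀ ε : ℝ, 0 < ε → ∃ y : X, ‖y‖ = 1 ∧
         ∀ t : ℝ, 0 < t → (1 - ε) * (‖x‖ + t) ≤ ‖x + t • y‖ ∧
           (1 - ε) * (‖x‖ + t) ≤ ‖x - t • y‖,
       ∀ x : X, ‖x‖ = 1 → ∀ ε : ℝ, 0 < ε → ∃ y : X, ‖y‖ = 1 ∧
         2 - ε ≤ ‖x + y‖ ∧ 2 - ε ≤ ‖x - y‖] :=
  stmt_1_general X
end
end

section
/- For a nontrivial real Banach space X the following are equivalent: (i) X is weakly octahedral; (ii) whenever E is a finite-dimensional subspace of X, x* ∈ B_{X*}, and ε > 0, there is y ∈ S_X such that ‖x + t·y‖ ≥ (1−ε)(|x*(x)| + t) for all x ∈ S_E and all t > 0; (iii) whenever n ∈ ℕ, x_1,…,x_n ∈ S_X, x* ∈ B_{X*}, and ε > 0, there is y ∈ S_X such that ‖x_i + t·y‖ ≥ (1−ε)(|x*(x_i)| + t) for all i ∈ {1,…,n} and all t ≥ ε. -/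
open Metric Set

noncomputable section

/-!
The three conditions are rescalings of one another: `‖x + t • y‖ ≥ (1 - ε) (|f x| + t)` is
positively homogeneous in `(x, t)`, so (i) ⇒ (ii) ⇒ (iii) is immediate. For (iii) ⇒ (i), apply
(iii) with `ε / 2` to a finite `ε² / 8`-net of the (compact) unit sphere of `E`; the inequality
passes from the net to the whole sphere at the cost of `ε² / 4`, which is absorbed by `ε t / 2`
because `t ≥ ε / 2`. A point `x ∈ E` is then handled by rescaling to `‖x‖⁻¹ • x` with
`t = ‖x‖⁻¹` when `ε ‖x‖ ≤ 2`, while for `ε ‖x‖ > 2` the triangle inequality alone suffices.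
-/

section OctahedralInequality

variable {X : Type*} [NormedAddCommGroup X] [NormedSpace ℝ X]

theorem le_norm_add_smul_iff (f : X →L[ℝ] ℝ) (ε : ℝ) (x y : X) {t : ℝ} (ht : 0 < t) :
    (1 - ε) * (|f x| + t) ≤ ‖x + t • y‖ ↔
      (1 - ε) * (|f (t⁻¹ • x)| + 1) ≤ ‖t⁻¹ • x + y‖ := by
  have hnorm : ‖x + t • y‖ = t * ‖t⁻¹ • x + y‖ := by
    rw [← norm_smul_of_nonneg ht.le, smul_add, smul_inv_smul₀ ht.ne']
  have hf : |f (t⁻¹ • x)| = t⁻¹ * |f x| := by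
    rw [map_smul, smul_eq_mul, abs_mul, abs_of_pos (inv_pos.2 ht)]
  have hlhs : (1 - ε) * (|f x| + t) = t * ((1 - ε) * (t⁻¹ * |f x| + 1)) := by
    field_simp
  rw [hnorm, hf, hlhs, mul_le_mul_iff_right₀ ht]

theorem one_sub_mul_le_norm_add_of_two_lt {f : X →L[ℝ] ℝ} (hf : ‖f‖ ≤ 1) {x y : X}
    (hy : ‖y‖ = 1) {ε : ℝ} (h : 2 < ε * ‖x‖) : (1 - ε) * (|f x| + 1) ≤ ‖x + y‖ := by
  have hfx : |f x| ≤ ‖x‖ := (f.le_opNorm x).trans (mul_le_of_le_one_left (norm_nonneg x) hf)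
  have hxy : ‖x‖ - 1 ≤ ‖x + y‖ := by
    simpa [hy] using norm_sub_le (x + y) y
  rcases le_or_gt ε 1 with hε | hε
  · nlinarith [mul_nonneg (sub_nonneg.2 hε) (sub_nonneg.2 hfx), norm_nonneg x]
  · nlinarith [mul_nonneg (sub_nonneg.2 hε.le) (add_nonneg (abs_nonneg (f x)) zero_le_one),
      norm_nonneg (x + y)]

theorem one_sub_mul_le_norm_add_smul_of_norm_sub_le {f : X →L[ℝ] ℝ} (hf : ‖f‖ ≤ 1) {ε : ℝ}
    (hε₀ : 0 ≤ ε) (hε₁ : ε ≤ 1) {u w y : X} {t δ : ℝ}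
    (hw : (1 - ε) * (|f w| + t) ≤ ‖w + t • y‖) (huw : ‖u - w‖ ≤ δ) :
    (1 - ε) * (|f u| + t) ≤ ‖u + t • y‖ + 2 * δ := by
  have hf : |f u| ≤ |f w| + δ := by
    calc |f u| ≤ |f w| + |f u - f w| := by linarith [abs_sub_abs_le_abs_sub (f u) (f w)]
      _ ≤ |f w| + δ := by
        rw [← map_sub]
        gcongr
        exact (f.le_opNorm _).trans (mul_le_of_le_one_left (norm_nonneg _) hf) |>.trans huw
  have hnorm : ‖w + t • y‖ ≤ ‖u + t • y‖ + δ := by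
    calc ‖w + t • y‖ = ‖(u + t • y) - (u - w)‖ := by congr 1; abel
      _ ≤ ‖u + t • y‖ + ‖u - w‖ := norm_sub_le _ _
      _ ≤ ‖u + t • y‖ + δ := by gcongr
  nlinarith [mul_le_mul_of_nonneg_left hf (sub_nonneg.2 hε₁), norm_nonneg (u - w)]

theorem exists_fin_net_unit_sphere (E : Subspace ℝ X) [FiniteDimensional ℝ E] {δ : ℝ}
    (hδ : 0 < δ) : ∃ (n : ℕ) (w : Fin n → X), (∀ i, ‖w i‖ = 1) ∧
      ∀ u ∈ E, ‖u‖ = 1 → ∃ i, ‖u - w i‖ < δ := by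
  have hK : IsCompact (((↑) : E → X) '' sphere 0 1) :=
    (isCompact_sphere 0 1).image continuous_subtype_val
  obtain ⟨s, hsK, hs, hcover⟩ := hK.finite_cover_balls hδ
  obtain ⟨n, w, rfl⟩ := hs.fin_embedding
  refine ⟨n, w, fun i => ?_, fun u hu hu1 => ?_⟩
  · obtain ⟨v, hv, hvw⟩ := hsK (Set.mem_range_self i)
    simpa [← hvw] using hv
  · obtain ⟨_, ⟨i, rfl⟩, hi⟩ := Set.mem_iUnion₂.1 (hcover ⟨⟨u, hu⟩, by simpa using hu1, rfl⟩)
    exact ⟨i, by simpa [dist_eq_norm] using hi⟩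

theorem one_sub_mul_le_norm_add_of_sphere {E : Subspace ℝ X} {f : X →L[ℝ] ℝ} (hf : ‖f‖ ≤ 1)
    {y : X} (hy : ‖y‖ = 1) {ε : ℝ} (hε : 0 ≤ ε)
    (h : ∀ u ∈ E, ‖u‖ = 1 → ∀ t, ε / 2 ≤ t → (1 - ε) * (|f u| + t) ≤ ‖u + t • y‖)
    {x : X} (hx : x ∈ E) : (1 - ε) * (|f x| + 1) ≤ ‖x + y‖ := by
  rcases eq_or_ne x 0 with rfl | hx0
  · simp [hy]
    linarith
  by_cases hbig : 2 < ε * ‖x‖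
  · exact one_sub_mul_le_norm_add_of_two_lt hf hy hbig
  have hs : 0 < ‖x‖ := norm_pos_iff.2 hx0
  have ht : ε / 2 ≤ ‖x‖⁻¹ := by
    rw [← one_div, le_div_iff₀ hs]
    linarith
  have hu : ‖‖x‖⁻¹ • x‖ = 1 := by
    rw [norm_smul, norm_inv, norm_norm, inv_mul_cancel₀ hs.ne']
  simpa [smul_inv_smul₀ hs.ne'] using
    (le_norm_add_smul_iff f ε _ y (inv_pos.2 hs)).1 (h _ (E.smul_mem _ hx) hu _ ht)

end OctahedralInequality

namespace WeaklyOctahedral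

variable {X : Type*} [NormedAddCommGroup X] [NormedSpace ℝ X]

theorem le_norm_add_smul (h : WeaklyOctahedral X) (E : Subspace ℝ X) (hE : FiniteDimensional ℝ E)
    (f : X →L[ℝ] ℝ) (hf : ‖f‖ ≤ 1) (ε : ℝ) (hε : 0 < ε) :
    ∃ y : X, ‖y‖ = 1 ∧ ∀ x ∈ E, ∀ t : ℝ, 0 < t → (1 - ε) * (|f x| + t) ≤ ‖x + t • y‖ := by
  obtain ⟨y, hy, hxy⟩ := h E hE f hf ε hε
  refine ⟨y, hy, fun x hx t ht => (le_norm_add_smul_iff f ε x y ht).2 ?_⟩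
  simpa [hy] using hxy _ (E.smul_mem t⁻¹ hx)

theorem of_forall_fin_family
    (h : ∀ (n : ℕ) (x : Fin n → X), (∀ i, ‖x i‖ = 1) →
      ∀ f : X →L[ℝ] ℝ, ‖f‖ ≤ 1 → ∀ ε : ℝ, 0 < ε →
        ∃ y : X, ‖y‖ = 1 ∧ ∀ i, ∀ t : ℝ, ε ≤ t → (1 - ε) * (|f (x i)| + t) ≤ ‖x i + t • y‖) :
    WeaklyOctahedral X := by
  intro E hE f hf ε hε
  wlog hε₁ : ε < 1 generalizing ε
  · obtain ⟨y, hy, hxy⟩ := this (1 / 2) (by norm_num) (by norm_num)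
    refine ⟨y, hy, fun x hx => le_trans ?_ (hxy x hx)⟩
    nlinarith [abs_nonneg (f x), norm_nonneg y]
  obtain ⟨n, w, hw, hnet⟩ := exists_fin_net_unit_sphere E (δ := ε ^ 2 / 8) (by positivity)
  obtain ⟨y, hy, hwy⟩ := h n w hw f hf (ε / 2) (by positivity)
  refine ⟨y, hy, fun x hx => ?_⟩
  rw [hy]
  refine one_sub_mul_le_norm_add_of_sphere hf hy hε.le (fun u hu hu1 t ht => ?_) hx
  obtain ⟨i, hi⟩ := hnet u hu hu1
  have hut := one_sub_mul_le_norm_add_smul_of_norm_sub_le hf (by positivity) (by linarith)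
    (hwy i t ht) hi.le
  nlinarith [mul_le_mul_of_nonneg_left ht hε.le, mul_nonneg hε.le (abs_nonneg (f u))]

end WeaklyOctahedral

theorem stmt_2_general (X : Type*) [NormedAddCommGroup X] [NormedSpace ℝ X] :
    List.TFAE
      [WeaklyOctahedral X,
       ∀ E : Subspace ℝ X, FiniteDimensional ℝ E →
         ∀ f : X →L[ℝ] ℝ, ‖f‖ ≤ 1 → ∀ ε : ℝ, 0 < ε →
           ∃ y : X, ‖y‖ = 1 ∧ ∀ x ∈ E, ‖x‖ = 1 →
             ∀ t : ℝ, 0 < t → (1 - ε) * (|f x| + t) ≤ ‖x + t • y‖,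
       ∀ (n : ℕ) (x : Fin n → X), (∀ i, ‖x i‖ = 1) →
         ∀ f : X →L[ℝ] ℝ, ‖f‖ ≤ 1 → ∀ ε : ℝ, 0 < ε →
           ∃ y : X, ‖y‖ = 1 ∧ ∀ i, ∀ t : ℝ, ε ≤ t →
             (1 - ε) * (|f (x i)| + t) ≤ ‖x i + t • y‖] := by
  tfae_have 1 → 2 := fun h E hE f hf ε hε => by
    obtain ⟨y, hy, hxy⟩ := h.le_norm_add_smul E hE f hf ε hε
    exact ⟨y, hy, fun x hx _ => hxy x hx⟩
  tfae_have 2 → 3 := fun h n x hx f hf ε hε => by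
    obtain ⟨y, hy, hxy⟩ := h (Submodule.span ℝ (Set.range x))
      (FiniteDimensional.span_of_finite ℝ (Set.finite_range x)) f hf ε hε
    exact ⟨y, hy, fun i t ht =>
      hxy (x i) (Submodule.subset_span (Set.mem_range_self i)) (hx i) t (hε.trans_le ht)⟩
  tfae_have 3 → 1 := WeaklyOctahedral.of_forall_fin_family
  tfae_finish

theorem stmt_2 (X : Type*) [NormedAddCommGroup X] [NormedSpace ℝ X] [CompleteSpace X] [Nontrivial X] :
    List.TFAE
      [WeaklyOctahedral X,
       ∀ E : Subspace ℝ X, FiniteDimensional ℝ E →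
         ∀ f : X →L[ℝ] ℝ, ‖f‖ ≤ 1 → ∀ ε : ℝ, 0 < ε →
           ∃ y : X, ‖y‖ = 1 ∧ ∀ x ∈ E, ‖x‖ = 1 →
             ∀ t : ℝ, 0 < t → (1 - ε) * (|f x| + t) ≤ ‖x + t • y‖,
       ∀ (n : ℕ) (x : Fin n → X), (∀ i, ‖x i‖ = 1) →
         ∀ f : X →L[ℝ] ℝ, ‖f‖ ≤ 1 → ∀ ε : ℝ, 0 < ε →
           ∃ y : X, ‖y‖ = 1 ∧ ∀ i, ∀ t : ℝ, ε ≤ t →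
             (1 - ε) * (|f (x i)| + t) ≤ ‖x i + t • y‖] :=
  stmt_2_general X
end
end

section
/- For a nontrivial real Banach space X the following are equivalent: (i) X is octahedral; (ii) whenever E is a finite-dimensional subspace of X and ε > 0, there is y ∈ S_X such that ‖x + t·y‖ ≥ (1−ε)(‖x‖ + t) for all x ∈ S_E and all t > 0; (iii) whenever n ∈ ℕ, x_1,…,x_n ∈ S_X, and ε > 0, there is y ∈ S_X such that ‖x_i + y‖ ≥ 2 − ε for all i ∈ {1,…,n}. -/
open Metric Set

noncomputable section

/-! (i) ⇒ (ii) is rescaling and (ii) ⇒ (iii) specialisation. For (iii) ⇒ (i), apply (iii) to a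
finite `ε/2`-net of the unit sphere of `E`: the resulting `y` satisfies `‖u + y‖ ≥ 2 - ε` for every
unit vector `u` of `E`, and by the triangle inequality this almost-additivity at `u` extends to
the whole ray through `u`. -/

section

variable {X : Type*} [NormedAddCommGroup X] [NormedSpace ℝ X]

theorem le_norm_add_smul_of_forall_le_norm_add {E : Submodule ℝ X} {y : X} {ε : ℝ}
    (h : ∀ x ∈ E, (1 - ε) * (‖x‖ + ‖y‖) ≤ ‖x + y‖) {x : X} (hx : x ∈ E) {t : ℝ} (ht : 0 < t) :
    (1 - ε) * (‖x‖ + t * ‖y‖) ≤ ‖x + t • y‖ := by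
  have hscaled := h (t⁻¹ • x) (E.smul_mem _ hx)
  rw [norm_smul, Real.norm_of_nonneg (inv_nonneg.2 ht.le)] at hscaled
  have hrescale : x + t • y = t • (t⁻¹ • x + y) := by
    rw [smul_add, smul_inv_smul₀ ht.ne']
  calc (1 - ε) * (‖x‖ + t * ‖y‖) = t * ((1 - ε) * (t⁻¹ * ‖x‖ + ‖y‖)) := by
        field_simp
    _ ≤ t * ‖t⁻¹ • x + y‖ := mul_le_mul_of_nonneg_left hscaled ht.le
    _ = ‖x + t • y‖ := by rw [hrescale, norm_smul, Real.norm_of_nonneg ht.le]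

/-- For `r ≤ 1` write `r • u + y = (u + y) - (1 - r) • u`, for `r ≥ 1` write
`r • u + y = r • (u + y) - (r - 1) • y`. -/
theorem mul_add_one_le_norm_smul_add {u y : X} {ε r : ℝ} (hu : ‖u‖ = 1) (hy : ‖y‖ = 1)
    (h : 2 - ε ≤ ‖u + y‖) (hr : 0 ≤ r) : (1 - ε) * (r + 1) ≤ ‖r • u + y‖ := by
  have hε : 0 ≤ ε := by linarith [norm_add_le u y]
  rcases le_total r 1 with hr1 | hr1
  · have hdecomp : r • u + y = (u + y) - (1 - r) • u := by
      rw [sub_smul, one_smul]; abel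
    have := norm_sub_norm_le (u + y) ((1 - r) • u)
    rw [← hdecomp, norm_smul, Real.norm_of_nonneg (by linarith), hu, mul_one] at this
    nlinarith
  · have hdecomp : r • u + y = r • (u + y) - (r - 1) • y := by
      rw [smul_add, sub_smul, one_smul]; abel
    have := norm_sub_norm_le (r • (u + y)) ((r - 1) • y)
    rw [← hdecomp, norm_smul, norm_smul, Real.norm_of_nonneg hr, Real.norm_of_nonneg (by linarith),
      hy, mul_one] at this
    nlinarith

theorem le_norm_add_of_forall_norm_eq_one {E : Submodule ℝ X} {y : X} {ε : ℝ} (hε : 0 ≤ ε)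
    (hy : ‖y‖ = 1) (h : ∀ u ∈ E, ‖u‖ = 1 → 2 - ε ≤ ‖u + y‖) :
    ∀ x ∈ E, (1 - ε) * (‖x‖ + ‖y‖) ≤ ‖x + y‖ := by
  intro x hx
  rw [hy]
  rcases eq_or_ne x 0 with rfl | hx0
  · simp [hy, hε]
  have hnorm : 0 < ‖x‖ := norm_pos_iff.2 hx0
  have hunit : ‖‖x‖⁻¹ • x‖ = 1 := norm_smul_inv_norm hx0
  have := mul_add_one_le_norm_smul_add hunit hy (h _ (E.smul_mem _ hx) hunit) hnorm.le
  rwa [smul_inv_smul₀ hnorm.ne'] at this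

theorem Submodule.exists_fin_net_of_norm_eq_one (E : Submodule ℝ X) [FiniteDimensional ℝ E]
    {δ : ℝ} (hδ : 0 < δ) : ∃ (n : ℕ) (x : Fin n → X), (∀ i, ‖x i‖ = 1) ∧
      ∀ u ∈ E, ‖u‖ = 1 → ∃ i, ‖u - x i‖ < δ := by
  set K : Set X := Subtype.val '' sphere (0 : E) 1
  have hK : IsCompact K := (isCompact_sphere (0 : E) 1).image continuous_subtype_val
  obtain ⟨s, hsK, hsfin, hcover⟩ := hK.finite_cover_balls hδ
  obtain ⟨n, x, hx⟩ := hsfin.fin_embedding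
  refine ⟨n, x, fun i => ?_, fun u hu hu1 => ?_⟩
  · obtain ⟨v, hv, hvx⟩ := hsK (hx ▸ mem_range_self i)
    simpa [← hvx] using hv
  · obtain ⟨c, hcs, hc⟩ := mem_iUnion₂.1 (hcover ⟨⟨u, hu⟩, by simpa using hu1, rfl⟩)
    obtain ⟨i, rfl⟩ := hx.symm ▸ hcs
    exact ⟨i, by rwa [← dist_eq_norm]⟩

theorem Octahedral.exists_forall_le_norm_add_smul (h : Octahedral X) (E : Subspace ℝ X)
    [FiniteDimensional ℝ E] {ε : ℝ} (hε : 0 < ε) :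
    ∃ y : X, ‖y‖ = 1 ∧ ∀ x ∈ E, ‖x‖ = 1 →
      ∀ t : ℝ, 0 < t → (1 - ε) * (‖x‖ + t) ≤ ‖x + t • y‖ := by
  obtain ⟨y, hy, hE⟩ := h E inferInstance ε hε
  refine ⟨y, hy, fun x hx _ t ht => ?_⟩
  simpa [hy] using le_norm_add_smul_of_forall_le_norm_add hE hx ht

theorem octahedral_of_forall_exists_two_sub_le_norm_add
    (h : ∀ (n : ℕ) (x : Fin n → X), (∀ i, ‖x i‖ = 1) →
      ∀ ε : ℝ, 0 < ε → ∃ y : X, ‖y‖ = 1 ∧ ∀ i, 2 - ε ≤ ‖x i + y‖) :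
    Octahedral X := by
  intro E _ ε hε
  obtain ⟨n, x, hx, hnet⟩ := E.exists_fin_net_of_norm_eq_one (half_pos hε)
  obtain ⟨y, hy, hxy⟩ := h n x hx (ε / 2) (half_pos hε)
  refine ⟨y, hy, le_norm_add_of_forall_norm_eq_one hε.le hy fun u hu hu1 => ?_⟩
  obtain ⟨i, hi⟩ := hnet u hu hu1
  have hdiff : x i + y - (x i - u) = u + y := by abel
  have := norm_sub_norm_le (x i + y) (x i - u)
  rw [hdiff, norm_sub_rev] at this
  linarith [hxy i]

end

theorem stmt_3_general (X : Type*) [NormedAddCommGroup X] [NormedSpace ℝ X] :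
    List.TFAE
      [Octahedral X,
       ∀ E : Subspace ℝ X, FiniteDimensional ℝ E → ∀ ε : ℝ, 0 < ε →
         ∃ y : X, ‖y‖ = 1 ∧ ∀ x ∈ E, ‖x‖ = 1 →
           ∀ t : ℝ, 0 < t → (1 - ε) * (‖x‖ + t) ≤ ‖x + t • y‖,
       ∀ (n : ℕ) (x : Fin n → X), (∀ i, ‖x i‖ = 1) → ∀ ε : ℝ, 0 < ε →
         ∃ y : X, ‖y‖ = 1 ∧ ∀ i, 2 - ε ≤ ‖x i + y‖] := by
  tfae_have 1 → 2 := fun h E _ ε hε => h.exists_forall_le_norm_add_smul E hε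
  tfae_have 2 → 3 := by
    intro h n x hx ε hε
    obtain ⟨y, hy, hxy⟩ := h (Submodule.span ℝ (range x))
      (FiniteDimensional.span_of_finite ℝ (finite_range x)) (ε / 2) (half_pos hε)
    refine ⟨y, hy, fun i => ?_⟩
    have := hxy (x i) (Submodule.subset_span (mem_range_self i)) (hx i) 1 one_pos
    rw [one_smul, hx i] at this
    linarith
  tfae_have 3 → 1 := octahedral_of_forall_exists_two_sub_le_norm_add
  tfae_finish

theorem stmt_3 (X : Type*) [NormedAddCommGroup X] [NormedSpace ℝ X] [CompleteSpace X] [Nontrivial X] :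
    List.TFAE
      [Octahedral X,
       ∀ E : Subspace ℝ X, FiniteDimensional ℝ E → ∀ ε : ℝ, 0 < ε →
         ∃ y : X, ‖y‖ = 1 ∧ ∀ x ∈ E, ‖x‖ = 1 →
           ∀ t : ℝ, 0 < t → (1 - ε) * (‖x‖ + t) ≤ ‖x + t • y‖,
       ∀ (n : ℕ) (x : Fin n → X), (∀ i, ‖x i‖ = 1) → ∀ ε : ℝ, 0 < ε →
         ∃ y : X, ‖y‖ = 1 ∧ ∀ i, 2 - ε ≤ ‖x i + y‖] :=
  stmt_3_general X
end
end

section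
/- For a nontrivial real Banach space X: the dual X* has the weak* strong diameter 2 property if and only if X is octahedral. -/
open Metric Set

noncomputable section

/-!
If `X` is octahedral and `x₁, …, xₙ ∈ S_X`, there is `y ∈ S_X` with `‖xᵢ ± y‖` close to `2`
for all `i`. Functionals almost norming `xᵢ + y`, resp. `xᵢ - y`, lie in the `i`-th weak* slice,
and their convex combinations are almost `1` at `y`, resp. `-1`, so they are almost `2` apart.

Conversely, two convex combinations `∑ λᵢ fᵢ` and `∑ λᵢ gᵢ` of slice elements at distance almost
`2`, with equal weights `1/n`, take the values almost `1`, resp. `-1`, at some `y ∈ S_X`; hence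
every `fᵢ` is almost `1` both at `xᵢ` and at `y`, and `‖xᵢ + y‖` is almost `2`. Applied to a
finite net of the unit sphere of a finite-dimensional subspace `E`, this gives `‖x + y‖ ≥ 2 - ε`
on `S_E`, which extends to `‖x + y‖ ≥ (1 - ε)(‖x‖ + 1)` on all of `E` by homogeneity.
-/

section

variable {X : Type*} [NormedAddCommGroup X] [NormedSpace ℝ X]

theorem apply_le_opNorm_mul_norm (f : X →L[ℝ] ℝ) (v : X) : f v ≤ ‖f‖ * ‖v‖ :=
  (le_abs_self _).trans (f.le_opNorm v)

theorem apply_le_norm_of_opNorm_le_one {f : X →L[ℝ] ℝ} (hf : ‖f‖ ≤ 1) (v : X) : f v ≤ ‖v‖ :=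
  (apply_le_opNorm_mul_norm f v).trans (mul_le_of_le_one_left (norm_nonneg v) hf)

theorem ContinuousLinearMap.exists_norm_eq_one_lt_apply (f : X →L[ℝ] ℝ) {r : ℝ} (hr₀ : 0 ≤ r)
    (hr : r < ‖f‖) : ∃ y : X, ‖y‖ = 1 ∧ r < f y := by
  obtain ⟨x, hx1, hfx⟩ := f.exists_lt_apply_of_lt_opNorm hr
  obtain ⟨z, hz1, hfz⟩ : ∃ z : X, ‖z‖ < 1 ∧ r < f z := by
    rcases le_or_gt 0 (f x) with h | h
    · exact ⟨x, hx1, by rwa [Real.norm_of_nonneg h] at hfx⟩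
    · exact ⟨-x, by rwa [norm_neg], by rwa [map_neg, ← Real.norm_of_nonpos h.le]⟩
  have hz0 : z ≠ 0 := by
    rintro rfl
    simp only [map_zero] at hfz
    linarith
  refine ⟨‖z‖⁻¹ • z, norm_smul_inv_norm hz0, ?_⟩
  rw [map_smul, smul_eq_mul]
  exact hfz.trans_le <| le_mul_of_one_le_left (by linarith)
    ((one_le_inv₀ (norm_pos_iff.2 hz0)).2 hz1.le)

theorem exists_dual_sub_le_apply_of_sub_le_norm_add {x y : X} (hx : ‖x‖ ≤ 1) (hy : ‖y‖ ≤ 1)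
    {η : ℝ} (h : 2 - η ≤ ‖x + y‖) : ∃ f : X →L[ℝ] ℝ, ‖f‖ ≤ 1 ∧ 1 - η ≤ f x ∧ 1 - η ≤ f y := by
  obtain ⟨f, hf, hfxy⟩ := exists_dual_vector'' ℝ (x + y)
  simp only [map_add, RCLike.ofReal_real_eq_id, id] at hfxy
  have hfx := apply_le_norm_of_opNorm_le_one hf x
  have hfy := apply_le_norm_of_opNorm_le_one hf y
  exact ⟨f, hf, by linarith, by linarith⟩

theorem le_sum_smul_apply {ι : Type*} [Fintype ι] {lam : ι → ℝ} (hlam : ∀ i, 0 ≤ lam i)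
    (hsum : ∑ i, lam i = 1) {g : ι → X →L[ℝ] ℝ} {v : X} {c : ℝ} (h : ∀ i, c ≤ g i v) :
    c ≤ (∑ i, lam i • g i) v :=
  calc c = ∑ i, lam i * c := by rw [← Finset.sum_mul, hsum, one_mul]
    _ ≤ ∑ i, lam i * g i v :=
      Finset.sum_le_sum fun i _ => mul_le_mul_of_nonneg_left (h i) (hlam i)
    _ = (∑ i, lam i • g i) v := by simp

theorem Finset.sub_lt_of_card_mul_sub_lt_sum {ι : Type*} {s : Finset ι} {a : ι → ℝ} {c η : ℝ}
    (ha : ∀ i ∈ s, a i ≤ c) (h : s.card * c - η < ∑ i ∈ s, a i) {j : ι} (hj : j ∈ s) :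
    c - η < a j := by
  have := Finset.single_le_sum (f := fun i => c - a i) (fun i hi => sub_nonneg.2 (ha i hi)) hj
  rw [Finset.sum_sub_distrib, Finset.sum_const, nsmul_eq_mul] at this
  linarith

theorem one_sub_mul_le_norm_smul_add {u y : X} (hu : ‖u‖ = 1) (hy : ‖y‖ = 1) {δ t : ℝ}
    (ht : 0 ≤ t) (h : 2 - δ ≤ ‖u + y‖) : (1 - δ) * (t + 1) ≤ ‖t • u + y‖ := by
  have hδ : 0 ≤ δ := by linarith [norm_add_le u y]
  rcases le_total t 1 with ht1 | ht1
  · have : ‖u + y‖ ≤ ‖t • u + y‖ + (1 - t) :=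
      calc ‖u + y‖ = ‖(t • u + y) + (1 - t) • u‖ := by congr 1; module
        _ ≤ ‖t • u + y‖ + ‖(1 - t) • u‖ := norm_add_le _ _
        _ = ‖t • u + y‖ + (1 - t) := by
          rw [norm_smul, hu, Real.norm_of_nonneg (by linarith), mul_one]
    nlinarith
  · have : t * ‖u + y‖ ≤ ‖t • u + y‖ + (t - 1) :=
      calc t * ‖u + y‖ = ‖t • (u + y)‖ := by rw [norm_smul, Real.norm_of_nonneg ht]
        _ = ‖(t • u + y) + (t - 1) • y‖ := by congr 1; module
        _ ≤ ‖t • u + y‖ + ‖(t - 1) • y‖ := norm_add_le _ _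
        _ = ‖t • u + y‖ + (t - 1) := by
          rw [norm_smul, hy, Real.norm_of_nonneg (by linarith), mul_one]
    nlinarith

theorem octahedral_of_forall_finite
    (h : ∀ s : Set X, s.Finite → (∀ x ∈ s, ‖x‖ = 1) → ∀ ε > 0,
      ∃ y : X, ‖y‖ = 1 ∧ ∀ x ∈ s, 2 - ε < ‖x + y‖) :
    Octahedral X := by
  intro E _ ε hε
  set K : Set X := (↑) '' sphere (0 : E) 1
  obtain ⟨t, htK, ht, hKt⟩ :=
    ((isCompact_sphere (0 : E) 1).image continuous_subtype_val).finite_cover_balls (half_pos hε)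
  have ht1 : ∀ z ∈ t, ‖z‖ = 1 := fun z hz => by
    obtain ⟨z, hz1, rfl⟩ := htK hz
    simpa using hz1
  obtain ⟨y, hy, hty⟩ := h t ht ht1 (ε / 2) (half_pos hε)
  have hKy : ∀ u ∈ K, 2 - ε ≤ ‖u + y‖ := by
    intro u hu
    obtain ⟨z, hz, huz⟩ := mem_iUnion₂.1 (hKt hu)
    have hnorm := norm_sub_norm_le (z + y) (z - u)
    rw [show z + y - (z - u) = u + y by abel, norm_sub_rev] at hnorm
    linarith [hty z hz, mem_ball_iff_norm.1 huz]
  refine ⟨y, hy, fun x hx => ?_⟩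
  rcases eq_or_ne x 0 with rfl | hx0
  · simp only [norm_zero, zero_add, hy]
    linarith
  · have hu : ‖‖x‖⁻¹ • x‖ = 1 := by
      rw [norm_smul, norm_inv, norm_norm, inv_mul_cancel₀ (norm_ne_zero_iff.2 hx0)]
    have hxK : ‖x‖⁻¹ • x ∈ K := ⟨⟨‖x‖⁻¹ • x, E.smul_mem _ hx⟩, by simpa using hu, rfl⟩
    have := one_sub_mul_le_norm_smul_add hu hy (norm_nonneg x) (hKy _ hxK)
    rw [smul_inv_smul₀ (norm_ne_zero_iff.2 hx0)] at this
    rwa [hy]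

/-- The convex combination `∑ λᵢ Sᵢ` of the weak* slices `Sᵢ = {f ∈ B_{X*} : f xᵢ > 1 - αᵢ}`. -/
def wStarSliceCombination {n : ℕ} (lam : Fin n → ℝ) (x : Fin n → X) (α : Fin n → ℝ) :
    Set (X →L[ℝ] ℝ) :=
  {f | ∃ g : Fin n → (X →L[ℝ] ℝ), (∀ i, ‖g i‖ ≤ 1 ∧ 1 - α i < g i (x i)) ∧ f = ∑ i, lam i • g i}

theorem wStarSliceCombination_subset_closedBall {n : ℕ} {lam : Fin n → ℝ}
    (hlam : ∀ i, 0 ≤ lam i) (hsum : ∑ i, lam i = 1) (x : Fin n → X) (α : Fin n → ℝ) :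
    wStarSliceCombination lam x α ⊆ closedBall 0 1 := by
  rintro - ⟨g, hg, rfl⟩
  exact (convex_closedBall 0 1).sum_mem (fun i _ => hlam i) hsum
    fun i _ => mem_closedBall_zero_iff.2 (hg i).1

theorem diam_wStarSliceCombination_le_two {n : ℕ} {lam : Fin n → ℝ}
    (hlam : ∀ i, 0 ≤ lam i) (hsum : ∑ i, lam i = 1) (x : Fin n → X) (α : Fin n → ℝ) :
    diam (wStarSliceCombination lam x α) ≤ 2 :=
  (diam_mono (wStarSliceCombination_subset_closedBall hlam hsum x α) isBounded_closedBall).trans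
    (by simpa using diam_closedBall (x := (0 : X →L[ℝ] ℝ)) zero_le_one)

theorem WStarStrongDiameterTwoProp.exists_lt_norm_add (H : WStarStrongDiameterTwoProp X)
    {n : ℕ} [NeZero n] {x : Fin n → X} (hx : ∀ i, ‖x i‖ = 1) {ε : ℝ} (hε : 0 < ε) :
    ∃ y : X, ‖y‖ = 1 ∧ ∀ i, 2 - ε < ‖x i + y‖ := by
  have hn : (0 : ℝ) < n := by exact_mod_cast Nat.pos_of_ne_zero (NeZero.ne n)
  set ρ := min ε 1 / (n + 1)
  have hρ : 0 < ρ := by positivity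
  have hρn : (n + 1) * ρ = min ε 1 := mul_div_cancel₀ _ (by positivity)
  have hρ1 : ρ ≤ 1 := by nlinarith [min_le_right ε 1]
  set lam : Fin n → ℝ := fun _ => (n : ℝ)⁻¹
  have hlam : ∀ i, 0 ≤ lam i := fun _ => by positivity
  have hsum : ∑ i, lam i = 1 := by simp [lam, hn.ne']
  set S := wStarSliceCombination lam x fun _ => ρ
  have hdiam : diam S = 2 := H n lam x _ hlam hsum hx fun _ => hρ
  obtain ⟨F, ⟨f, hf, rfl⟩, G, hG, hFG⟩ : ∃ F ∈ S, ∃ G ∈ S, 2 - ρ < dist F G := by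
    by_contra! h
    linarith [diam_le_of_forall_dist_le (by linarith) h]
  obtain ⟨y, hy, hFGy⟩ := (_ - G).exists_norm_eq_one_lt_apply (by linarith) (dist_eq_norm _ G ▸ hFG)
  have hGy : -1 ≤ G y := by
    have := apply_le_norm_of_opNorm_le_one
      (mem_closedBall_zero_iff.1 (wStarSliceCombination_subset_closedBall hlam hsum x _ hG)) (-y)
    rw [map_neg, norm_neg, hy] at this
    linarith
  have hfy : ∀ j, 1 - n * ρ < f j y := by
    have hF : 1 - ρ < ∑ i, lam i * f i y := by
      simp only [sub_apply] at hFGy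
      simpa using (show 1 - ρ < (∑ i, lam i • f i) y by linarith)
    rw [← Finset.mul_sum] at hF
    have hsum_fy : ((Finset.univ : Finset (Fin n)).card : ℝ) * 1 - n * ρ < ∑ i, f i y := by
      rw [Finset.card_univ, Fintype.card_fin, mul_one]
      linarith [(lt_inv_mul_iff₀ hn).1 hF]
    refine fun j => Finset.sub_lt_of_card_mul_sub_lt_sum (fun i _ => ?_) hsum_fy (Finset.mem_univ j)
    simpa [hy] using apply_le_norm_of_opNorm_le_one (hf i).1 y
  refine ⟨y, hy, fun j => ?_⟩
  calc 2 - ε ≤ (1 - ρ) + (1 - n * ρ) := by linarith [min_le_left ε 1]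
    _ < f j (x j) + f j y := add_lt_add (hf j).2 (hfy j)
    _ = f j (x j + y) := (map_add _ _ _).symm
    _ ≤ ‖x j + y‖ := apply_le_norm_of_opNorm_le_one (hf j).1 _

theorem WStarStrongDiameterTwoProp.exists_lt_norm_add_of_finite [Nontrivial X]
    (H : WStarStrongDiameterTwoProp X) {s : Set X} (hs : s.Finite) (hs1 : ∀ x ∈ s, ‖x‖ = 1)
    {ε : ℝ} (hε : 0 < ε) : ∃ y : X, ‖y‖ = 1 ∧ ∀ x ∈ s, 2 - ε < ‖x + y‖ := by
  obtain ⟨x₀, hx₀⟩ := exists_norm_eq X zero_le_one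
  obtain ⟨n, x, -, hx⟩ := (hs.insert x₀).fin_param
  have : NeZero n := ⟨by
    rintro rfl
    exact (insert_nonempty x₀ s).ne_empty (by simpa using hx.symm)⟩
  have hx1 : ∀ i, ‖x i‖ = 1 := fun i => by
    rcases (hx ▸ mem_range_self i : x i ∈ insert x₀ s) with h | h
    · rwa [h]
    · exact hs1 _ h
  obtain ⟨y, hy, hxy⟩ := H.exists_lt_norm_add hx1 hε
  refine ⟨y, hy, fun z hz => ?_⟩
  obtain ⟨i, rfl⟩ : z ∈ range x := hx ▸ mem_insert_of_mem _ hz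
  exact hxy i

theorem Octahedral.exists_le_norm_add_and_le_norm_sub (H : Octahedral X) {n : ℕ}
    {x : Fin n → X} (hx : ∀ i, ‖x i‖ = 1) {ε : ℝ} (hε : 0 < ε) :
    ∃ y : X, ‖y‖ = 1 ∧ ∀ i, 2 - ε ≤ ‖x i + y‖ ∧ 2 - ε ≤ ‖x i - y‖ := by
  obtain ⟨y, hy, hE⟩ := H (Submodule.span ℝ (range x))
    (FiniteDimensional.span_of_finite ℝ (finite_range x)) (ε / 2) (half_pos hε)
  have key : ∀ z ∈ Submodule.span ℝ (range x), ‖z‖ = 1 → 2 - ε ≤ ‖z + y‖ := fun z hz hz1 => by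
    have := hE z hz
    rw [hz1, hy] at this
    linarith
  refine ⟨y, hy, fun i => ⟨key _ (Submodule.subset_span ⟨i, rfl⟩) (hx i), ?_⟩⟩
  have := key (-x i) (neg_mem (Submodule.subset_span ⟨i, rfl⟩)) (by rw [norm_neg, hx i])
  rwa [neg_add_eq_sub, norm_sub_rev] at this

theorem Octahedral.two_sub_two_mul_le_diam_wStarSliceCombination (H : Octahedral X) {n : ℕ}
    {lam : Fin n → ℝ} (hlam : ∀ i, 0 ≤ lam i) (hsum : ∑ i, lam i = 1) {x : Fin n → X}
    (hx : ∀ i, ‖x i‖ = 1) {α : Fin n → ℝ} {η : ℝ} (hη : 0 < η) (hηα : ∀ i, η < α i) :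
    2 - 2 * η ≤ diam (wStarSliceCombination lam x α) := by
  obtain ⟨y, hy, hxy⟩ := H.exists_le_norm_add_and_le_norm_sub hx hη
  choose f hf hfx hfy using fun i =>
    exists_dual_sub_le_apply_of_sub_le_norm_add (hx i).le hy.le (hxy i).1
  choose g hg hgx hgy using fun i =>
    exists_dual_sub_le_apply_of_sub_le_norm_add (hx i).le (by rw [norm_neg, hy] : ‖-y‖ ≤ 1)
      (by simpa only [← sub_eq_add_neg] using (hxy i).2)
  have mem : ∀ h : Fin n → X →L[ℝ] ℝ, (∀ i, ‖h i‖ ≤ 1) → (∀ i, 1 - η ≤ h i (x i)) →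
      ∑ i, lam i • h i ∈ wStarSliceCombination lam x α :=
    fun h hh hhx => ⟨h, fun i => ⟨hh i, by linarith [hηα i, hhx i]⟩, rfl⟩
  set F := ∑ i, lam i • f i
  set G := ∑ i, lam i • g i
  calc 2 - 2 * η = (1 - η) + (1 - η) := by ring
    _ ≤ F y + G (-y) :=
      add_le_add (le_sum_smul_apply hlam hsum hfy) (le_sum_smul_apply hlam hsum hgy)
    _ = (F - G) y := by rw [map_neg, sub_apply, sub_eq_add_neg]
    _ ≤ ‖F - G‖ := by simpa [hy] using apply_le_opNorm_mul_norm (F - G) y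
    _ = dist F G := (dist_eq_norm F G).symm
    _ ≤ diam (wStarSliceCombination lam x α) :=
      dist_le_diam_of_mem (isBounded_closedBall.subset
        (wStarSliceCombination_subset_closedBall hlam hsum x α)) (mem f hf hfx) (mem g hg hgx)

theorem Octahedral.wStarStrongDiameterTwoProp (H : Octahedral X) :
    WStarStrongDiameterTwoProp X := by
  intro n lam x α hlam hsum hx hα
  show diam (wStarSliceCombination lam x α) = 2
  have : Nonempty (Fin n) := by
    by_contra!
    simp at hsum
  obtain ⟨i₀, hi₀⟩ := Finite.exists_min α
  refine le_antisymm (diam_wStarSliceCombination_le_two hlam hsum x α)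
    (le_of_forall_pos_le_add fun ε hε => ?_)
  set η := min (ε / 2) (α i₀ / 2)
  have hη : 0 < η := lt_min (half_pos hε) (half_pos (hα i₀))
  have hηα : ∀ i, η < α i :=
    fun i => (min_le_right _ _).trans_lt ((half_lt_self (hα i₀)).trans_le (hi₀ i))
  linarith [H.two_sub_two_mul_le_diam_wStarSliceCombination hlam hsum hx hη hηα,
    min_le_left (ε / 2) (α i₀ / 2)]

end

theorem stmt_9_general (X : Type*) [NormedAddCommGroup X] [NormedSpace ℝ X] [Nontrivial X] :
    WStarStrongDiameterTwoProp X ↔ Octahedral X :=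
  ⟨fun H => octahedral_of_forall_finite fun _ hs hs1 _ hε =>
    H.exists_lt_norm_add_of_finite hs hs1 hε, Octahedral.wStarStrongDiameterTwoProp⟩

theorem stmt_9 (X : Type*) [NormedAddCommGroup X] [NormedSpace ℝ X] [CompleteSpace X] [Nontrivial X] :
    WStarStrongDiameterTwoProp X ↔ Octahedral X :=
  stmt_9_general X
end
end

section
/- Let X and Y be nontrivial real Banach spaces. If X is locally octahedral, then X ⊕₁ Y (the direct sum with norm ‖(x,y)‖ = ‖x‖ + ‖y‖) is locally octahedral. -/
open Metric Set

noncomputable section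

open WithLp

lemma WithLp.norm_smul_add_toLp_inl_of_L1 {X Y : Type*} [SeminormedAddCommGroup X]
    [NormedSpace ℝ X] [SeminormedAddCommGroup Y] [NormedSpace ℝ Y]
    (z : WithLp 1 (X × Y)) (u : X) (s : ℝ) :
    ‖s • z + toLp 1 (u, 0)‖ = ‖s • z.fst + u‖ + |s| * ‖z.snd‖ := by
  simp only [prod_norm_eq_of_L1, add_fst, add_snd, smul_fst, smul_snd, toLp_fst, toLp_snd,
    add_zero, norm_smul, Real.norm_eq_abs]

theorem stmt_12_general (X Y : Type*) [NormedAddCommGroup X] [NormedSpace ℝ X]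
    [NormedAddCommGroup Y] [NormedSpace ℝ Y]
    (h : LocallyOctahedral X) :
    LocallyOctahedral (WithLp 1 (X × Y)) := by
  intro z ε hε
  obtain ⟨u, hu, hu_oct⟩ := h z.fst ε hε
  have hu' : ‖toLp 1 (u, (0 : Y))‖ = 1 := by rw [norm_toLp_fst, hu]
  refine ⟨toLp 1 (u, 0), hu', fun s => ?_⟩
  have hfst := hu_oct s
  rw [hu] at hfst
  rw [norm_smul_add_toLp_inl_of_L1, hu', prod_norm_eq_of_L1 z]
  have hsnd : (1 - ε) * (|s| * ‖z.snd‖) ≤ |s| * ‖z.snd‖ :=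
    mul_le_of_le_one_left (by positivity) (by linarith)
  linarith

theorem stmt_12 (X Y : Type*) [NormedAddCommGroup X] [NormedSpace ℝ X] [CompleteSpace X] [Nontrivial X]
    [NormedAddCommGroup Y] [NormedSpace ℝ Y] [CompleteSpace Y] [Nontrivial Y]
    (h : LocallyOctahedral X) :
    LocallyOctahedral (WithLp 1 (X × Y)) :=
  stmt_12_general X Y h
end
end

section
/- Let X and Y be nontrivial real Banach spaces and let 1 < p ≤ ∞. If X and Y are both locally octahedral, then X ⊕_p Y is locally octahedral. -/
open Metric Set
open scoped ENNReal

noncomputable section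

/-!
Given `z = (x, y)`, take unit vectors `u ∈ X`, `v ∈ Y` witnessing local octahedrality at `x` and
at `y`; after rescaling, `u` also works against every multiple `a • u` with `a ≥ 0`. Put
`w = (a • u, b • v)`, where `(a, b)` is the unit vector of `ℓ_p²` on the ray through
`(‖x‖, ‖y‖)`. The `ℓ_p` norm is monotone in the norms of the components, so `‖s • z + w‖`
dominates the `ℓ_p²` norm of `(1 - ε) • (|s| • (‖x‖, ‖y‖) + (a, b))`, and the norm is additive on
a ray, which makes that `(1 - ε) * (|s| * ‖z‖ + 1)`.
-/

open WithLp

section ProdNorm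

variable {α β γ δ : Type*} [SeminormedAddCommGroup α] [SeminormedAddCommGroup β]
  [SeminormedAddCommGroup γ] [SeminormedAddCommGroup δ] {p : ℝ≥0∞}

theorem WithLp.prod_norm_le_of_norm_le (hp : p ≠ 0) {x : WithLp p (α × β)}
    {y : WithLp p (γ × δ)} (h₁ : ‖x.fst‖ ≤ ‖y.fst‖) (h₂ : ‖x.snd‖ ≤ ‖y.snd‖) : ‖x‖ ≤ ‖y‖ := by
  rcases eq_or_ne p ∞ with rfl | hp'
  · simp only [prod_norm_eq_sup]
    exact sup_le_sup h₁ h₂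
  · have hp₀ : 0 < p.toReal := ENNReal.toReal_pos hp hp'
    simp only [prod_norm_eq_add hp₀]
    gcongr

theorem WithLp.prod_norm_eq_norm_toLp_norm (hp : p ≠ 0) (x : WithLp p (α × β)) :
    ‖x‖ = ‖toLp p (‖x.fst‖, ‖x.snd‖)‖ :=
  le_antisymm (prod_norm_le_of_norm_le hp (by simp) (by simp))
    (prod_norm_le_of_norm_le hp (by simp) (by simp))

end ProdNorm

theorem WithLp.exists_nonneg_norm_eq_one_sameRay (p : ℝ≥0∞) [Fact (1 ≤ p)] {a b : ℝ}
    (ha : 0 ≤ a) (hb : 0 ≤ b) :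
    ∃ c : WithLp p (ℝ × ℝ), 0 ≤ c.fst ∧ 0 ≤ c.snd ∧ ‖c‖ = 1 ∧ SameRay ℝ (toLp p (a, b)) c := by
  rcases eq_or_ne (toLp p (a, b)) 0 with h | h
  · exact ⟨toLp p (1, 0), zero_le_one, le_rfl, by simp [norm_toLp_fst], h ▸ SameRay.zero_left _⟩
  · refine ⟨‖toLp p (a, b)‖⁻¹ • toLp p (a, b), ?_, ?_, norm_smul_inv_norm h,
      SameRay.sameRay_nonneg_smul_right _ (by positivity)⟩ <;>
    simp only [smul_fst, smul_snd] <;> positivity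

theorem LocallyOctahedral.exists_norm_eq_one_forall_nonneg_smul {X : Type*}
    [NormedAddCommGroup X] [NormedSpace ℝ X] (hX : LocallyOctahedral X) (x : X) {ε : ℝ}
    (hε : 0 < ε) :
    ∃ u : X, ‖u‖ = 1 ∧ ∀ a : ℝ, 0 ≤ a → ∀ s : ℝ, (1 - ε) * (|s| * ‖x‖ + a) ≤ ‖s • x + a • u‖ := by
  obtain ⟨u, hu, hxu⟩ := hX x ε hε
  refine ⟨u, hu, fun a ha s => ?_⟩
  rcases ha.eq_or_lt with rfl | ha
  · have : 0 ≤ |s| * ‖x‖ := by positivity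
    simp only [add_zero, zero_smul, norm_smul, Real.norm_eq_abs]
    nlinarith
  · calc (1 - ε) * (|s| * ‖x‖ + a) = a * ((1 - ε) * (|s / a| * ‖x‖ + ‖u‖)) := by
          rw [hu, abs_div, abs_of_pos ha]; field_simp
      _ ≤ a * ‖(s / a) • x + u‖ := by gcongr; exact hxu _
      _ = ‖a • ((s / a) • x + u)‖ := by rw [norm_smul, Real.norm_of_nonneg ha.le]
      _ = ‖s • x + a • u‖ := by rw [smul_add, smul_smul, mul_div_cancel₀ _ ha.ne']

theorem stmt_13_general (X Y : Type*) [NormedAddCommGroup X] [NormedSpace ℝ X]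
    [NormedAddCommGroup Y] [NormedSpace ℝ Y]
    (p : ℝ≥0∞) [Fact (1 ≤ p)]
    (hX : LocallyOctahedral X) (hY : LocallyOctahedral Y) :
    LocallyOctahedral (WithLp p (X × Y)) := by
  intro z ε hε
  have hp : p ≠ 0 := (zero_lt_one.trans_le Fact.out).ne'
  obtain ⟨u, hu, hXu⟩ := hX.exists_norm_eq_one_forall_nonneg_smul z.fst hε
  obtain ⟨v, hv, hYv⟩ := hY.exists_norm_eq_one_forall_nonneg_smul z.snd hε
  obtain ⟨c, hc₁, hc₂, hc, hzc⟩ :=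
    exists_nonneg_norm_eq_one_sameRay p (norm_nonneg z.fst) (norm_nonneg z.snd)
  set w : WithLp p (X × Y) := toLp p (c.fst • u, c.snd • v)
  have hw : ‖w‖ = 1 := by
    rw [prod_norm_eq_norm_toLp_norm hp, ← hc]
    simp only [w, toLp_fst, toLp_snd, norm_smul, Real.norm_eq_abs, abs_of_nonneg hc₁,
      abs_of_nonneg hc₂, hu, hv, mul_one]
    rfl
  refine ⟨w, hw, fun s => ?_⟩
  rcases le_or_gt 1 ε with hε₁ | hε₁
  · exact (mul_nonpos_of_nonpos_of_nonneg (by linarith) (by positivity)).trans (norm_nonneg _)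
  calc (1 - ε) * (|s| * ‖z‖ + ‖w‖)
      = (1 - ε) * ‖|s| • toLp p (‖z.fst‖, ‖z.snd‖) + c‖ := by
        rw [(hzc.nonneg_smul_left (abs_nonneg s)).norm_add, norm_smul, hw, hc,
          ← prod_norm_eq_norm_toLp_norm hp, Real.norm_eq_abs, abs_abs]
    _ = ‖(1 - ε) • (|s| • toLp p (‖z.fst‖, ‖z.snd‖) + c)‖ := by
        rw [norm_smul, Real.norm_of_nonneg (by linarith)]
    _ ≤ ‖s • z + w‖ := by
        apply prod_norm_le_of_norm_le hp
        · simp only [w, smul_fst, add_fst, toLp_fst, smul_eq_mul, Real.norm_eq_abs]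
          rw [abs_of_nonneg (by positivity)]
          exact hXu _ hc₁ s
        · simp only [w, smul_snd, add_snd, toLp_snd, smul_eq_mul, Real.norm_eq_abs]
          rw [abs_of_nonneg (by positivity)]
          exact hYv _ hc₂ s

theorem stmt_13 (X Y : Type*) [NormedAddCommGroup X] [NormedSpace ℝ X] [CompleteSpace X] [Nontrivial X]
    [NormedAddCommGroup Y] [NormedSpace ℝ Y] [CompleteSpace Y] [Nontrivial Y]
    (p : ℝ≥0∞) [Fact (1 ≤ p)] (hp : 1 < p)
    (hX : LocallyOctahedral X) (hY : LocallyOctahedral Y) :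
    LocallyOctahedral (WithLp p (X × Y)) :=
  stmt_13_general X Y p hX hY
end
end
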